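/- arXiv:1408.3896 — 3 statements merged into one kernel-verified Lean document; each statement's English description precedes it below -/
import Mathlib

section
/- With the setup of dual lattices L, L̃ in V = V₁ ⊕ V₂, Ṽ = Ṽ₁ ⊕ Ṽ₂ with V₁ ⊥ Ṽ₂ and V₂ ⊥ Ṽ₁, set Lᵢ = L ∩ Vᵢ and Λᵢ = πᵢ(L). Then the projection maps π₁ and π₂ induce O-module isomorphisms L/(L₁ ⊕ L₂) ≅ Λ₁/L₁ and L/(L₁ ⊕ L₂) ≅ Λ₂/L₂. -/
/-!
Write `x ∈ L` as `x = f x + (x - f x)` with `f` the projection onto `V₁` along `V₂`. The second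
summand lies in `V₂`, so it lies in `L` exactly when `f x` does; hence `x ∈ L₁ ⊕ L₂` iff
`f x ∈ L₁`, which is the kernel computation. Surjectivity holds because `Λ₁ = f(L)` by definition.
-/

open LinearMap Submodule

section IdempotentProjection

variable {R M : Type*} [Ring R] [AddCommGroup M] [Module R M] {f : M →ₗ[R] M}

theorem IsIdempotentElem.mem_inf_range_sup_inf_ker_iff (hf : IsIdempotentElem f)
    {L : Submodule R M} {x : M} (hx : x ∈ L) :
    x ∈ L ⊓ range f ⊔ L ⊓ ker f ↔ f x ∈ L := by
  constructor
  · intro h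
    obtain ⟨a, ⟨haL, b, rfl⟩, c, ⟨-, hc : f c = 0⟩, rfl⟩ := mem_sup.1 h
    rwa [map_add, hc, add_zero, ← Module.End.mul_apply, hf.eq]
  · intro h
    have hker : x - f x ∈ ker f := by
      rw [mem_ker, map_sub, ← Module.End.mul_apply, hf.eq, sub_self]
    simpa using add_mem_sup (mem_inf.2 ⟨h, mem_range_self f x⟩)
      (mem_inf.2 ⟨L.sub_mem hx h, hker⟩)

theorem IsIdempotentElem.ker_mkQ_comp_eq_and_surjective (hf : IsIdempotentElem f)
    (L : Submodule R M) (g : L →ₗ[R] L.map f) (hg : ∀ x : L, (g x : M) = f x) :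
    ker ((comap (L.map f).subtype (L ⊓ range f)).mkQ ∘ₗ g)
        = comap L.subtype (L ⊓ range f ⊔ L ⊓ ker f)
      ∧ Function.Surjective ((comap (L.map f).subtype (L ⊓ range f)).mkQ ∘ₗ g) := by
  constructor
  · ext x
    simp only [mem_ker, coe_comp, Function.comp_apply, mkQ_apply, Quotient.mk_eq_zero,
      mem_comap, subtype_apply, hg, mem_inf, mem_range_self, and_true]
    exact (hf.mem_inf_range_sup_inf_ker_iff x.2).symm
  · have hg_surj : Function.Surjective g := by
      rintro ⟨_, x, hx, rfl⟩
      exact ⟨⟨x, hx⟩, Subtype.ext (hg _)⟩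
    exact (mkQ_surjective _).comp hg_surj

end IdempotentProjection

theorem IsIdempotentElem.restrictScalars {R S M : Type*} [Semiring R] [Semiring S]
    [AddCommMonoid M] [Module R M] [Module S M] [LinearMap.CompatibleSMul M M R S]
    {f : M →ₗ[S] M} (hf : IsIdempotentElem f) : IsIdempotentElem (f.restrictScalars R) :=
  LinearMap.ext fun x => congr($hf.eq x)

theorem stmt1_general (O : Type*) [CommRing O]
    (E : Type*) [Field E] [Algebra O E]
    (V : Type*) [AddCommGroup V] [Module E V]
    [Module O V] [IsScalarTower O E V]
    (L : Submodule O V)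
    (V₁ V₂ : Submodule E V) (hV : IsCompl V₁ V₂)
    (L₁ L₂ : Submodule O V)
    (hL₁ : L₁ = L ⊓ V₁.restrictScalars O) (hL₂ : L₂ = L ⊓ V₂.restrictScalars O)
    (Λ₁ Λ₂ : Submodule O V)
    (hΛ₁ : Λ₁ = Submodule.map (LinearMap.restrictScalars O
      (V₁.subtype.comp (Submodule.linearProjOfIsCompl V₁ V₂ hV))) L)
    (hΛ₂ : Λ₂ = Submodule.map (LinearMap.restrictScalars O
      (V₂.subtype.comp (Submodule.linearProjOfIsCompl V₂ V₁ hV.symm))) L) :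
    (∀ g₁ : ↥L →ₗ[O] ↥Λ₁,
      (∀ x : ↥L, (g₁ x : V)
          = V₁.subtype (Submodule.linearProjOfIsCompl V₁ V₂ hV (x : V))) →
      LinearMap.ker ((Submodule.comap Λ₁.subtype L₁).mkQ.comp g₁)
          = Submodule.comap L.subtype (L₁ ⊔ L₂)
        ∧ Function.Surjective ((Submodule.comap Λ₁.subtype L₁).mkQ.comp g₁)) ∧
    (∀ g₂ : ↥L →ₗ[O] ↥Λ₂,
      (∀ x : ↥L, (g₂ x : V)
          = V₂.subtype (Submodule.linearProjOfIsCompl V₂ V₁ hV.symm (x : V))) →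
      LinearMap.ker ((Submodule.comap Λ₂.subtype L₂).mkQ.comp g₂)
          = Submodule.comap L.subtype (L₁ ⊔ L₂)
        ∧ Function.Surjective ((Submodule.comap Λ₂.subtype L₂).mkQ.comp g₂)) := by
  have h₁ := (isIdempotentElem_projection hV).restrictScalars (R := O)
  have h₂ := (isIdempotentElem_projection hV.symm).restrictScalars (R := O)
  have hrange₁ : range ((V₁.projection V₂ hV).restrictScalars O) = V₁.restrictScalars O := by
    rw [range_restrictScalars, range_projection]
  have hker₁ : ker ((V₁.projection V₂ hV).restrictScalars O) = V₂.restrictScalars O := by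
    rw [ker_restrictScalars, ker_projection]
  have hrange₂ : range ((V₂.projection V₁ hV.symm).restrictScalars O) = V₂.restrictScalars O := by
    rw [range_restrictScalars, range_projection]
  have hker₂ : ker ((V₂.projection V₁ hV.symm).restrictScalars O) = V₁.restrictScalars O := by
    rw [ker_restrictScalars, ker_projection]
  subst hL₁ hL₂ hΛ₁ hΛ₂
  refine ⟨fun g₁ hg₁ => ?_, fun g₂ hg₂ => ?_⟩
  · have := h₁.ker_mkQ_comp_eq_and_surjective L g₁ hg₁
    rwa [hrange₁, hker₁] at this
  · have := h₂.ker_mkQ_comp_eq_and_surjective L g₂ hg₂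
    rwa [hrange₂, hker₂, sup_comm] at this

/-- The projections π₁, π₂ induce isomorphisms L/(L₁ ⊕ L₂) ≅ Λ₁/L₁ and L/(L₁ ⊕ L₂) ≅ Λ₂/L₂:
the composite map L → Λᵢ → Λᵢ/Lᵢ induced by πᵢ is surjective with kernel L₁ ⊔ L₂. -/
theorem stmt1 (O : Type*) [CommRing O] [IsDomain O] [IsDiscreteValuationRing O]
    (E : Type*) [Field E] [Algebra O E] [IsFractionRing O E]
    (V Vt : Type*) [AddCommGroup V] [Module E V] [FiniteDimensional E V]
    [AddCommGroup Vt] [Module E Vt] [FiniteDimensional E Vt]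
    [Module O V] [IsScalarTower O E V] [Module O Vt] [IsScalarTower O E Vt]
    (B : V →ₗ[E] Vt →ₗ[E] E)
    (hBnd₁ : ∀ v : V, v ≠ 0 → ∃ w, B v w ≠ 0)
    (hBnd₂ : ∀ w : Vt, w ≠ 0 → ∃ v, B v w ≠ 0)
    (L : Submodule O V) (Lt : Submodule O Vt)
    (hLfg : L.FG) (hLspan : Submodule.span E (L : Set V) = ⊤)
    (hLtfg : Lt.FG) (hLtspan : Submodule.span E (Lt : Set Vt) = ⊤)
    (hdual₁ : ∀ w : Vt, w ∈ Lt ↔ ∀ v ∈ L, B v w ∈ Set.range (algebraMap O E))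
    (hdual₂ : ∀ v : V, v ∈ L ↔ ∀ w ∈ Lt, B v w ∈ Set.range (algebraMap O E))
    (V₁ V₂ : Submodule E V) (hV : IsCompl V₁ V₂)
    (W₁ W₂ : Submodule E Vt) (hW : IsCompl W₁ W₂)
    (hperp₁ : ∀ v ∈ V₁, ∀ w ∈ W₂, B v w = 0)
    (hperp₂ : ∀ v ∈ V₂, ∀ w ∈ W₁, B v w = 0)
    (L₁ L₂ : Submodule O V)
    (hL₁ : L₁ = L ⊓ V₁.restrictScalars O) (hL₂ : L₂ = L ⊓ V₂.restrictScalars O)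
    (Λ₁ Λ₂ : Submodule O V)
    (hΛ₁ : Λ₁ = Submodule.map (LinearMap.restrictScalars O
      (V₁.subtype.comp (Submodule.linearProjOfIsCompl V₁ V₂ hV))) L)
    (hΛ₂ : Λ₂ = Submodule.map (LinearMap.restrictScalars O
      (V₂.subtype.comp (Submodule.linearProjOfIsCompl V₂ V₁ hV.symm))) L) :
    (∀ g₁ : ↥L →ₗ[O] ↥Λ₁,
      (∀ x : ↥L, (g₁ x : V)
          = V₁.subtype (Submodule.linearProjOfIsCompl V₁ V₂ hV (x : V))) →
      LinearMap.ker ((Submodule.comap Λ₁.subtype L₁).mkQ.comp g₁)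
          = Submodule.comap L.subtype (L₁ ⊔ L₂)
        ∧ Function.Surjective ((Submodule.comap Λ₁.subtype L₁).mkQ.comp g₁)) ∧
    (∀ g₂ : ↥L →ₗ[O] ↥Λ₂,
      (∀ x : ↥L, (g₂ x : V)
          = V₂.subtype (Submodule.linearProjOfIsCompl V₂ V₁ hV.symm (x : V))) →
      LinearMap.ker ((Submodule.comap Λ₂.subtype L₂).mkQ.comp g₂)
          = Submodule.comap L.subtype (L₁ ⊔ L₂)
        ∧ Function.Surjective ((Submodule.comap Λ₂.subtype L₂).mkQ.comp g₂)) :=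
  stmt1_general O E V L V₁ V₂ hV L₁ L₂ hL₁ hL₂ Λ₁ Λ₂ hΛ₁ hΛ₂
end

section
/- Let O be a DVR with maximal ideal ℘ and fraction field E, and let V, Ṽ, L, L̃, V₁, Ṽ₁, L₁, L̃₁, Λ₁ be as in the lattice setup with perfect pairing. Then the congruence module C(L; V₁, V₂) = L/(L₁ ⊕ L₂) is nonzero if and only if the discriminant disc(L₁ × L̃₁) (the index |L̃₁*/L₁| as an ideal of O, where the dual is taken inside V₁) has positive ℘-adic valuation. -/
/-!
Decompose `x ∈ L` as `x₁ + x₂` along `V₁ ⊕ V₂`. Since `V₂` pairs trivially with `W₁`, the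
component `x₁` pairs integrally with `L̃₁`, i.e. lies in `L̃₁*`; so if `L̃₁* = L₁` then
`x₁, x₂ ∈ L` and `L = L₁ ⊕ L₂`. Conversely, if `L = L₁ ⊕ L₂`, then by duality `L̃` is stable under
the projection `Ṽ → W₁`, so for `v ∈ L̃₁*` and `w ∈ L̃` the value `⟨v, w⟩ = ⟨v, w₁⟩` is integral,
whence `v ∈ L` and `L̃₁* = L₁`.
-/

open Submodule

theorem Submodule.nontrivial_quotient_comap_subtype_iff {R M : Type*} [Ring R] [AddCommGroup M]
    [Module R M] (L N : Submodule R M) : Nontrivial (L ⧸ N.comap L.subtype) ↔ ¬ L ≤ N := by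
  rw [← not_subsingleton_iff_nontrivial, Quotient.subsingleton_iff, comap_subtype_eq_top]

section LatticePairing

variable {O E V Vt : Type*} [CommRing O] [CommRing E] [Algebra O E]
  [AddCommGroup V] [Module E V] [Module O V] [IsScalarTower O E V]
  [AddCommGroup Vt] [Module E Vt] [Module O Vt]

/-- The lattice `L̃₁*` of the paper: the dual of `L̃₁ = L̃ ∩ W₁` taken inside `V₁`. -/
def dualLatticeIn (B : V →ₗ[E] Vt →ₗ[E] E) (V₁ : Submodule E V) (Lt : Submodule O Vt)
    (W₁ : Submodule E Vt) : Set V :=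
  {v | v ∈ V₁ ∧ ∀ w : Vt, w ∈ Lt → w ∈ W₁ → B v w ∈ Set.range (algebraMap O E)}

variable {B : V →ₗ[E] Vt →ₗ[E] E} {L : Submodule O V} {Lt : Submodule O Vt}
  {V₁ V₂ : Submodule E V} {W₁ W₂ : Submodule E Vt}

theorem inf_subset_dualLatticeIn
    (hLLt : ∀ v ∈ L, ∀ w ∈ Lt, B v w ∈ Set.range (algebraMap O E)) :
    ((L ⊓ V₁.restrictScalars O : Submodule O V) : Set V) ⊆ dualLatticeIn B V₁ Lt W₁ :=
  fun v ⟨hvL, hvV₁⟩ => ⟨hvV₁, fun w hwLt _ => hLLt v hvL w hwLt⟩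

theorem le_sup_of_dualLatticeIn_subset
    (hLLt : ∀ v ∈ L, ∀ w ∈ Lt, B v w ∈ Set.range (algebraMap O E))
    (hV : V₁ ⊔ V₂ = ⊤) (hperp₂ : ∀ v ∈ V₂, ∀ w ∈ W₁, B v w = 0)
    (hdual : dualLatticeIn B V₁ Lt W₁ ⊆ L) :
    L ≤ L ⊓ V₁.restrictScalars O ⊔ L ⊓ V₂.restrictScalars O := by
  intro x hxL
  obtain ⟨x₁, hx₁, x₂, hx₂, rfl⟩ := mem_sup.mp (hV ▸ mem_top : x ∈ V₁ ⊔ V₂)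
  have hx₁L : x₁ ∈ L := hdual ⟨hx₁, fun w hwLt hwW₁ => by
    simpa [hperp₂ x₂ hx₂ w hwW₁] using hLLt _ hxL w hwLt⟩
  have hx₂L : x₂ ∈ L := by simpa using L.sub_mem hxL hx₁L
  exact mem_sup.mpr ⟨x₁, ⟨hx₁L, hx₁⟩, x₂, ⟨hx₂L, hx₂⟩, rfl⟩

theorem mem_of_add_mem_of_le_sup
    (hLLt : ∀ v ∈ L, ∀ w ∈ Lt, B v w ∈ Set.range (algebraMap O E))
    (hLt : ∀ w : Vt, (∀ v ∈ L, B v w ∈ Set.range (algebraMap O E)) → w ∈ Lt)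
    (hperp₁ : ∀ v ∈ V₁, ∀ w ∈ W₂, B v w = 0) (hperp₂ : ∀ v ∈ V₂, ∀ w ∈ W₁, B v w = 0)
    (hle : L ≤ L ⊓ V₁.restrictScalars O ⊔ L ⊓ V₂.restrictScalars O)
    {w₁ w₂ : Vt} (hw₁ : w₁ ∈ W₁) (hw₂ : w₂ ∈ W₂) (hw : w₁ + w₂ ∈ Lt) : w₁ ∈ Lt := by
  refine hLt w₁ fun u huL => ?_
  obtain ⟨a, ⟨haL, haV₁⟩, b, ⟨-, hbV₂⟩, rfl⟩ := mem_sup.mp (hle huL)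
  have hpair : B (a + b) w₁ = B a (w₁ + w₂) := by
    simp [hperp₂ b hbV₂ w₁ hw₁, hperp₁ a haV₁ w₂ hw₂]
  exact hpair ▸ hLLt a haL _ hw

theorem dualLatticeIn_subset_of_le_sup
    (hLLt : ∀ v ∈ L, ∀ w ∈ Lt, B v w ∈ Set.range (algebraMap O E))
    (hLt : ∀ w : Vt, (∀ v ∈ L, B v w ∈ Set.range (algebraMap O E)) → w ∈ Lt)
    (hL : ∀ v : V, (∀ w ∈ Lt, B v w ∈ Set.range (algebraMap O E)) → v ∈ L)
    (hW : W₁ ⊔ W₂ = ⊤)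
    (hperp₁ : ∀ v ∈ V₁, ∀ w ∈ W₂, B v w = 0) (hperp₂ : ∀ v ∈ V₂, ∀ w ∈ W₁, B v w = 0)
    (hle : L ≤ L ⊓ V₁.restrictScalars O ⊔ L ⊓ V₂.restrictScalars O) :
    dualLatticeIn B V₁ Lt W₁ ⊆ L := by
  rintro v ⟨hvV₁, hv⟩
  refine hL v fun w hwLt => ?_
  obtain ⟨w₁, hw₁, w₂, hw₂, rfl⟩ := mem_sup.mp (hW ▸ mem_top : w ∈ W₁ ⊔ W₂)
  have hw₁Lt := mem_of_add_mem_of_le_sup hLLt hLt hperp₁ hperp₂ hle hw₁ hw₂ hwLt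
  simpa [hperp₁ v hvV₁ w₂ hw₂] using hv w₁ hw₁Lt hw₁

end LatticePairing

theorem stmt2_general (O : Type*) [CommRing O]
    (E : Type*) [Field E] [Algebra O E]
    (V Vt : Type*) [AddCommGroup V] [Module E V]
    [AddCommGroup Vt] [Module E Vt]
    [Module O V] [IsScalarTower O E V] [Module O Vt]
    (B : V →ₗ[E] Vt →ₗ[E] E)
    (L : Submodule O V) (Lt : Submodule O Vt)
    (hdual₁ : ∀ w : Vt, w ∈ Lt ↔ ∀ v ∈ L, B v w ∈ Set.range (algebraMap O E))
    (hdual₂ : ∀ v : V, v ∈ L ↔ ∀ w ∈ Lt, B v w ∈ Set.range (algebraMap O E))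
    (V₁ V₂ : Submodule E V) (hV : IsCompl V₁ V₂)
    (W₁ W₂ : Submodule E Vt) (hW : IsCompl W₁ W₂)
    (hperp₁ : ∀ v ∈ V₁, ∀ w ∈ W₂, B v w = 0)
    (hperp₂ : ∀ v ∈ V₂, ∀ w ∈ W₁, B v w = 0)
    (L₁ L₂ : Submodule O V)
    (hL₁ : L₁ = L ⊓ V₁.restrictScalars O) (hL₂ : L₂ = L ⊓ V₂.restrictScalars O) :
    Nontrivial (↥L ⧸ Submodule.comap L.subtype (L₁ ⊔ L₂)) ↔
      {v : V | v ∈ V₁ ∧ ∀ w : Vt, w ∈ Lt → w ∈ W₁ →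
        B v w ∈ Set.range (algebraMap O E)} ≠ (L₁ : Set V) := by
  subst hL₁ hL₂
  have hLLt v := (hdual₂ v).mp
  have hLt w := (hdual₁ w).mpr
  have hL v := (hdual₂ v).mpr
  change _ ↔ dualLatticeIn B V₁ Lt W₁ ≠ _
  rw [nontrivial_quotient_comap_subtype_iff, not_iff_not, Set.Subset.antisymm_iff,
    and_iff_left (inf_subset_dualLatticeIn hLLt)]
  constructor
  · intro hle v hv
    exact ⟨dualLatticeIn_subset_of_le_sup hLLt hLt hL hW.sup_eq_top hperp₁ hperp₂ hle hv, hv.1⟩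
  · intro hdual
    exact le_sup_of_dualLatticeIn_subset hLLt hV.sup_eq_top hperp₂ fun v hv => (hdual hv).1

/-- The congruence module C(L; V₁, V₂) = L/(L₁ ⊕ L₂) is nonzero iff the discriminant
disc(L₁ × L̃₁) has positive ℘-adic valuation, i.e. iff the dual lattice L̃₁* (inside V₁)
strictly contains L₁. -/
theorem stmt2 (O : Type*) [CommRing O] [IsDomain O] [IsDiscreteValuationRing O]
    (E : Type*) [Field E] [Algebra O E] [IsFractionRing O E]
    (V Vt : Type*) [AddCommGroup V] [Module E V] [FiniteDimensional E V]
    [AddCommGroup Vt] [Module E Vt] [FiniteDimensional E Vt]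
    [Module O V] [IsScalarTower O E V] [Module O Vt] [IsScalarTower O E Vt]
    (B : V →ₗ[E] Vt →ₗ[E] E)
    (hBnd₁ : ∀ v : V, v ≠ 0 → ∃ w, B v w ≠ 0)
    (hBnd₂ : ∀ w : Vt, w ≠ 0 → ∃ v, B v w ≠ 0)
    (L : Submodule O V) (Lt : Submodule O Vt)
    (hLfg : L.FG) (hLspan : Submodule.span E (L : Set V) = ⊤)
    (hLtfg : Lt.FG) (hLtspan : Submodule.span E (Lt : Set Vt) = ⊤)
    (hdual₁ : ∀ w : Vt, w ∈ Lt ↔ ∀ v ∈ L, B v w ∈ Set.range (algebraMap O E))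
    (hdual₂ : ∀ v : V, v ∈ L ↔ ∀ w ∈ Lt, B v w ∈ Set.range (algebraMap O E))
    (V₁ V₂ : Submodule E V) (hV : IsCompl V₁ V₂)
    (W₁ W₂ : Submodule E Vt) (hW : IsCompl W₁ W₂)
    (hperp₁ : ∀ v ∈ V₁, ∀ w ∈ W₂, B v w = 0)
    (hperp₂ : ∀ v ∈ V₂, ∀ w ∈ W₁, B v w = 0)
    (L₁ L₂ : Submodule O V)
    (hL₁ : L₁ = L ⊓ V₁.restrictScalars O) (hL₂ : L₂ = L ⊓ V₂.restrictScalars O) :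
    Nontrivial (↥L ⧸ Submodule.comap L.subtype (L₁ ⊔ L₂)) ↔
      {v : V | v ∈ V₁ ∧ ∀ w : Vt, w ∈ Lt → w ∈ W₁ →
        B v w ∈ Set.range (algebraMap O E)} ≠ (L₁ : Set V) :=
  stmt2_general O E V Vt B L Lt hdual₁ hdual₂ V₁ V₂ hV W₁ W₂ hW hperp₁ hperp₂ L₁ L₂ hL₁ hL₂
end

section
/- Let O be a DVR, H° a commutative O-subalgebra of End_O(L) for a finite free O-module L, and suppose H°_E := H° ⊗ E decomposes as e₁H°_E × e₂H°_E for complementary idempotents e₁, e₂ ∈ H°_E. Set H°ᵢ = H° ∩ eᵢH°_E. Then there are natural isomorphisms H°/(H°₁ ⊕ H°₂) ≅ e₁H°/H°₁ ≅ e₂H°/H°₂ of O-modules. -/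
open TensorProduct

/-!
Multiplication by `e₁` maps `H°` onto `e₁H°` and sends `H°₁ ⊕ H°₂` onto `H°₁`, since `e₁`
fixes `e₁H°_E` and kills `e₂H°_E`. Conversely, if `e₁x ∈ H°` for some `x ∈ H°`, then
`x = e₁x + e₂x` with `e₂x = x - e₁x ∈ H°`, so `x ∈ H°₁ ⊕ H°₂`. Hence `x ↦ e₁x` induces
`H°/(H°₁ ⊕ H°₂) ≅ e₁H°/H°₁`; the same argument with `e₂` gives the other isomorphism.
-/

theorem mul_self_eq_of_add_eq_one_of_mul_eq_zero {B : Type*} [Ring B] {e f : B}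
    (hsum : e + f = 1) (horth : e * f = 0) : e * e = e :=
  calc e * e = e * (e + f) := by rw [mul_add, horth, add_zero]
    _ = e := by rw [hsum, mul_one]

namespace Submodule

variable {O B : Type*} [CommRing O] [Ring B] [Algebra O B] {e f : B} {H : Submodule O B}

theorem mem_inf_range_mulLeft_sup_iff (hsum : e + f = 1) (horth : e * f = 0) {x : B}
    (hx : x ∈ H) :
    x ∈ H ⊓ LinearMap.range (LinearMap.mulLeft O e) ⊔
        H ⊓ LinearMap.range (LinearMap.mulLeft O f) ↔ e * x ∈ H := by
  constructor
  · intro hmem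
    obtain ⟨a, ⟨haH, y, rfl⟩, b, ⟨-, z, rfl⟩, rfl⟩ := mem_sup.mp hmem
    have hea : e * (e * y) = e * y := by
      rw [← mul_assoc, mul_self_eq_of_add_eq_one_of_mul_eq_zero hsum horth]
    have heb : e * (f * z) = 0 := by rw [← mul_assoc, horth, zero_mul]
    simp only [LinearMap.mulLeft_apply] at haH ⊢
    rwa [mul_add, hea, heb, add_zero]
  · intro hex
    have hfx : f * x = x - e * x := by rw [← sub_eq_of_eq_add' hsum.symm, sub_mul, one_mul]
    have hsplit : x = e * x + f * x := by rw [← add_mul, hsum, one_mul]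
    rw [hsplit]
    exact add_mem_sup ⟨hex, x, rfl⟩ ⟨hfx ▸ H.sub_mem hx hex, x, rfl⟩

variable (e f H)

noncomputable def mulLeftQuotMap :
    H →ₗ[O] (H.map (LinearMap.mulLeft O e) ⧸
      (H ⊓ LinearMap.range (LinearMap.mulLeft O e)).comap
        (H.map (LinearMap.mulLeft O e)).subtype) :=
  mkQ _ ∘ₗ (LinearMap.mulLeft O e).submoduleMap H

theorem mulLeftQuotMap_surjective : Function.Surjective (mulLeftQuotMap e H) :=
  (mkQ_surjective _).comp (LinearMap.submoduleMap_surjective _ H)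

theorem ker_mulLeftQuotMap (hsum : e + f = 1) (horth : e * f = 0) :
    LinearMap.ker (mulLeftQuotMap e H) = (H ⊓ LinearMap.range (LinearMap.mulLeft O e) ⊔
      H ⊓ LinearMap.range (LinearMap.mulLeft O f)).comap H.subtype := by
  ext ⟨x, hx⟩
  rw [LinearMap.mem_ker, mulLeftQuotMap, LinearMap.comp_apply, mkQ_apply, Quotient.mk_eq_zero,
    mem_comap, mem_comap, subtype_apply, subtype_apply, LinearMap.submoduleMap_coe_apply,
    mem_inf_range_mulLeft_sup_iff hsum horth hx]
  exact ⟨fun h => h.1, fun h => ⟨h, x, rfl⟩⟩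

noncomputable def quotSupEquivQuotMapMulLeft (hsum : e + f = 1) (horth : e * f = 0) :
    (H ⧸ (H ⊓ LinearMap.range (LinearMap.mulLeft O e) ⊔
        H ⊓ LinearMap.range (LinearMap.mulLeft O f)).comap H.subtype) ≃ₗ[O]
      (H.map (LinearMap.mulLeft O e) ⧸
        (H ⊓ LinearMap.range (LinearMap.mulLeft O e)).comap
          (H.map (LinearMap.mulLeft O e)).subtype) :=
  quotEquivOfEq _ _ (ker_mulLeftQuotMap e f H hsum horth).symm ≪≫ₗ
    (mulLeftQuotMap e H).quotKerEquivOfSurjective (mulLeftQuotMap_surjective e H)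

end Submodule

theorem stmt3_general (O : Type*) [CommRing O]
    (E : Type*) [Field E] [Algebra O E]
    (A : Type*) [CommRing A] [Algebra O A]
    (e₁ e₂ : E ⊗[O] A)
    (hsum : e₁ + e₂ = 1) (horth : e₁ * e₂ = 0)
    -- H = image of H° in H°_E,   Cᵢ = eᵢH°,   H°ᵢ = H° ∩ eᵢH°_E
    (H : Submodule O (E ⊗[O] A))
    (C₁ C₂ H₁ H₂ : Submodule O (E ⊗[O] A))
    (hC₁ : C₁ = Submodule.map (LinearMap.mulLeft O e₁) H)
    (hC₂ : C₂ = Submodule.map (LinearMap.mulLeft O e₂) H)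
    (hH₁ : H₁ = H ⊓ LinearMap.range (LinearMap.mulLeft O e₁))
    (hH₂ : H₂ = H ⊓ LinearMap.range (LinearMap.mulLeft O e₂)) :
    Nonempty ((↥H ⧸ Submodule.comap H.subtype (H₁ ⊔ H₂)) ≃ₗ[O]
        (↥C₁ ⧸ Submodule.comap C₁.subtype H₁)) ∧
    Nonempty ((↥H ⧸ Submodule.comap H.subtype (H₁ ⊔ H₂)) ≃ₗ[O]
        (↥C₂ ⧸ Submodule.comap C₂.subtype H₂)) := by
  subst hC₁ hC₂ hH₁ hH₂
  refine ⟨⟨Submodule.quotSupEquivQuotMapMulLeft e₁ e₂ H hsum horth⟩, ?_⟩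
  rw [sup_comm]
  exact ⟨Submodule.quotSupEquivQuotMapMulLeft e₂ e₁ H (by rwa [add_comm])
    (by rwa [mul_comm])⟩

/-- For a commutative O-subalgebra H° of End_O(L) (modelled by a commutative O-algebra A,
finite free as an O-module) with H°_E = E ⊗ A = e₁H°_E × e₂H°_E, setting
H°ᵢ = H° ∩ eᵢH°_E, one has natural isomorphisms
H°/(H°₁ ⊕ H°₂) ≅ e₁H°/H°₁ ≅ e₂H°/H°₂ of O-modules. -/
theorem stmt3 (O : Type*) [CommRing O] [IsDomain O] [IsDiscreteValuationRing O]
    (E : Type*) [Field E] [Algebra O E] [IsFractionRing O E]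
    (A : Type*) [CommRing A] [Algebra O A] [Module.Finite O A] [Module.Free O A]
    (e₁ e₂ : E ⊗[O] A)
    (hsum : e₁ + e₂ = 1) (horth : e₁ * e₂ = 0)
    (hid₁ : e₁ * e₁ = e₁) (hid₂ : e₂ * e₂ = e₂)
    -- H = image of H° in H°_E,   Cᵢ = eᵢH°,   H°ᵢ = H° ∩ eᵢH°_E
    (H : Submodule O (E ⊗[O] A))
    (hH : H = LinearMap.range ((Algebra.TensorProduct.includeRight :
        A →ₐ[O] E ⊗[O] A).toLinearMap))
    (C₁ C₂ H₁ H₂ : Submodule O (E ⊗[O] A))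
    (hC₁ : C₁ = Submodule.map (LinearMap.mulLeft O e₁) H)
    (hC₂ : C₂ = Submodule.map (LinearMap.mulLeft O e₂) H)
    (hH₁ : H₁ = H ⊓ LinearMap.range (LinearMap.mulLeft O e₁))
    (hH₂ : H₂ = H ⊓ LinearMap.range (LinearMap.mulLeft O e₂)) :
    Nonempty ((↥H ⧸ Submodule.comap H.subtype (H₁ ⊔ H₂)) ≃ₗ[O]
        (↥C₁ ⧸ Submodule.comap C₁.subtype H₁)) ∧
    Nonempty ((↥H ⧸ Submodule.comap H.subtype (H₁ ⊔ H₂)) ≃ₗ[O]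
        (↥C₂ ⧸ Submodule.comap C₂.subtype H₂)) :=
  stmt3_general O E A e₁ e₂ hsum horth H C₁ C₂ H₁ H₂ hC₁ hC₂ hH₁ hH₂
end
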